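/- arXiv:math/0510206 — 3 statements merged into one kernel-verified Lean document; each statement's English description precedes it below -/
import Mathlib

section
/- Let n ≥ 1, s ∈ ℝ, α ≥ 0, and C ∈ (0,∞). Let k, l : [0,∞) → (0,∞) be regularly varying with index α and satisfy lim_{t→∞} l(t)/k(t) = C. Let v : [0,∞) → {measurable functions ℝⁿ → ℂ} and let W : ℝⁿ → ℂ be measurable with ∫_{ℝⁿ}(1+|ξ|²)^s |W(ξ)|² dξ < ∞. Assume that for all 0 < c < d < ∞, sup_{τ∈[c,d]} ∫_{ℝⁿ}(1+|ξ|²)^s |v(Tτ)(ξ/k(T)) − W(τ^α ξ)|² dξ → 0 as T → ∞. Then for all 0 < c < d < ∞, sup_{τ∈[c,d]} ∫_{ℝⁿ}(1+|ξ|²)^s |v(Tτ)(ξ/l(T)) − W(τ^α ξ / C)|² dξ → 0 as T → ∞. -/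
/-!
Substituting `ξ = (l T / k T) • η` turns the `l`-rescaling into the `k`-rescaling compared with
the dilated profile `W ((τ ^ α * β) • η)`, `β = l T / k T / C → 1`. On dilations by factors in a
compact subset of `(0, ∞)` the weight `(1 + ‖ξ‖²)^s` and the Jacobian change only by bounded
factors, so it remains to see that `β ↦ W (β • ·)` is continuous at `β = 1` in
`L²((1 + ‖ξ‖²)^s dξ)`. That holds for continuous compactly supported `W` by dominated
convergence, and these are dense.
-/

open MeasureTheory Set Filter
open scoped ENNReal NNReal
open Topology Module

lemma rpow_le_rpow_abs_of_mem_Icc_inv {r x : ℝ} (hx : 0 < x) (hxr : x ∈ Icc r⁻¹ r) (s : ℝ) :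
    x ^ s ≤ r ^ |s| := by
  rcases le_total 0 s with hs | hs
  · rw [abs_of_nonneg hs]
    exact Real.rpow_le_rpow hx.le hxr.2 hs
  · rw [abs_of_nonpos hs]
    calc x ^ s = x⁻¹ ^ (-s) := by rw [Real.inv_rpow hx.le, Real.rpow_neg hx.le, inv_inv]
      _ ≤ r ^ (-s) := Real.rpow_le_rpow (inv_nonneg.2 hx.le)
          (inv_le_of_inv_le₀ (hx.trans_le hxr.2) hxr.1) (neg_nonneg.2 hs)

lemma inv_mem_Icc_inv {r a : ℝ} (ha : 0 < a) (har : a ∈ Icc r⁻¹ r) : a⁻¹ ∈ Icc r⁻¹ r :=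
  ⟨inv_anti₀ ha har.2, inv_le_of_inv_le₀ (ha.trans_le har.2) har.1⟩

lemma one_add_norm_smul_sq_rpow_le {E : Type*} [NormedAddCommGroup E] [NormedSpace ℝ E]
    {r a : ℝ} (ha : 0 < a) (har : a ∈ Icc r⁻¹ r) (s : ℝ) (ξ : E) :
    (1 + ‖a • ξ‖ ^ 2) ^ s ≤ (r ^ 2) ^ |s| * (1 + ‖ξ‖ ^ 2) ^ s := by
  have hr : 0 < r := ha.trans_le har.2
  have hr1 : 1 ≤ r ^ 2 := by
    rw [sq]; exact (inv_le_iff_one_le_mul₀ hr).1 (har.1.trans har.2)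
  have ha2 : a ^ 2 ∈ Icc (r ^ 2)⁻¹ (r ^ 2) :=
    ⟨by rw [← inv_pow]; exact pow_le_pow_left₀ (by positivity) har.1 2,
      pow_le_pow_left₀ ha.le har.2 2⟩
  set t := ‖ξ‖ ^ 2
  have ht : 0 ≤ t := by positivity
  have hquot : (1 + a ^ 2 * t) / (1 + t) ∈ Icc (r ^ 2)⁻¹ (r ^ 2) := by
    have hr1' : (r ^ 2)⁻¹ ≤ 1 := inv_le_one_of_one_le₀ hr1
    constructor
    · rw [le_div_iff₀ (by positivity)]
      nlinarith [mul_le_mul_of_nonneg_right ha2.1 ht]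
    · rw [div_le_iff₀ (by positivity)]
      nlinarith [mul_le_mul_of_nonneg_right ha2.2 ht]
  rw [norm_smul, mul_pow, Real.norm_eq_abs, sq_abs,
    ← div_mul_cancel₀ (1 + a ^ 2 * t) (by positivity : (1 + t) ≠ 0),
    Real.mul_rpow (by positivity) (by positivity)]
  gcongr
  exact rpow_le_rpow_abs_of_mem_Icc_inv (by positivity) hquot s

lemma lintegral_enorm_sq_eq_eLpNorm_sq {α F : Type*} [MeasurableSpace α] [NormedAddCommGroup F]
    (μ : Measure α) (f : α → F) : ∫⁻ x, ‖f x‖ₑ ^ 2 ∂μ = eLpNorm f 2 μ ^ 2 := by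
  simpa using (eLpNorm_nnreal_pow_eq_lintegral (μ := μ) (f := f) (p := 2) two_ne_zero).symm

lemma lintegral_enorm_sub_sq_le {α F : Type*} [MeasurableSpace α] [NormedAddCommGroup F]
    {μ : Measure α} {f g h : α → F} (hf : AEStronglyMeasurable f μ)
    (hg : AEStronglyMeasurable g μ) :
    ∫⁻ x, ‖f x - h x‖ₑ ^ 2 ∂μ
      ≤ 2 * ∫⁻ x, ‖f x - g x‖ₑ ^ 2 ∂μ + 2 * ∫⁻ x, ‖g x - h x‖ₑ ^ 2 ∂μ := by
  calc ∫⁻ x, ‖f x - h x‖ₑ ^ 2 ∂μ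
      ≤ ∫⁻ x, 2 * ‖f x - g x‖ₑ ^ 2 + 2 * ‖g x - h x‖ₑ ^ 2 ∂μ := by
        refine lintegral_mono fun x => ?_
        rw [← mul_add]
        simp only [enorm_eq_nnnorm, ← nndist_eq_nnnorm]
        exact_mod_cast (pow_le_pow_left₀ zero_le (nndist_triangle _ _ _) 2).trans add_sq_le
    _ = _ := by
        have hfg : AEMeasurable (fun x => 2 * ‖f x - g x‖ₑ ^ 2) μ :=
          ((hf.sub hg).enorm.pow_const 2).const_mul 2
        rw [lintegral_add_left' hfg, lintegral_const_mul' _ _ ENNReal.ofNat_ne_top,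
          lintegral_const_mul' _ _ ENNReal.ofNat_ne_top]

lemma HasCompactSupport.tendsto_lintegral_enorm_sub_comp_smul_sq {E F : Type*}
    [NormedAddCommGroup E] [NormedSpace ℝ E] [ProperSpace E] [MeasurableSpace E] [BorelSpace E]
    [NormedAddCommGroup F] {μ : Measure E} [IsFiniteMeasureOnCompacts μ] {g : E → F}
    (hgc : HasCompactSupport g) (hg : Continuous g) :
    Tendsto (fun β : ℝ => ∫⁻ ξ, ‖g ξ - g (β • ξ)‖ₑ ^ 2 ∂μ) (𝓝 1) (𝓝 0) := by
  obtain ⟨R, hR, hgR⟩ := hgc.isCompact.isBounded.subset_closedBall_lt 0 (0 : E)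
  obtain ⟨M, hM⟩ := hg.bounded_above_of_compact_support hgc
  have hg0 : ∀ ξ, R < ‖ξ‖ → g ξ = 0 := fun ξ hξ =>
    image_eq_zero_of_notMem_tsupport fun h => by
      have := hgR h
      rw [Metric.mem_closedBall, dist_zero_right] at this
      linarith
  have hcont : Continuous fun p : ℝ × E => ‖g p.2 - g (p.1 • p.2)‖ₑ ^ 2 :=
    (ENNReal.continuous_pow 2).comp ((hg.comp continuous_snd).sub (hg.comp (by fun_prop))).enorm
  have hdom := tendsto_lintegral_filter_of_dominated_convergence (μ := μ) (l := 𝓝 (1 : ℝ))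
    (F := fun β ξ => ‖g ξ - g (β • ξ)‖ₑ ^ 2)
    (f := fun _ => 0)
    ((Metric.closedBall (0 : E) (2 * R)).indicator fun _ => ENNReal.ofReal ((2 * M) ^ 2))
    (Eventually.of_forall fun β => (hcont.comp (Continuous.prodMk_right β)).measurable) ?_ ?_ ?_
  · simpa using hdom
  · filter_upwards [Ioi_mem_nhds (by norm_num : (1 / 2 : ℝ) < 1)] with β hβ
    refine ae_of_all _ fun ξ => ?_
    by_cases hξ : ‖ξ‖ ≤ 2 * R
    · rw [indicator_of_mem (by simpa using hξ), ← ofReal_norm, ← ENNReal.ofReal_pow (norm_nonneg _)]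
      refine ENNReal.ofReal_le_ofReal (pow_le_pow_left₀ (norm_nonneg _) ?_ 2)
      linarith [norm_sub_le (g ξ) (g (β • ξ)), hM ξ, hM (β • ξ)]
    · have hβξ : ‖β • ξ‖ = β * ‖ξ‖ := by
        rw [norm_smul, Real.norm_of_nonneg (by linarith [mem_Ioi.1 hβ])]
      rw [hg0 ξ (by linarith), hg0 (β • ξ) (by nlinarith [mem_Ioi.1 hβ]), sub_self, enorm_zero]
      simp
  · rw [lintegral_indicator_const measurableSet_closedBall]
    exact ENNReal.mul_ne_top ENNReal.ofReal_ne_top measure_closedBall_lt_top.ne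
  · exact ae_of_all _ fun ξ => (hcont.comp (Continuous.prodMk_left ξ)).tendsto' 1 0 (by simp)

lemma exists_pos_lt_of_tendsto_zero {f : ℝ → ℝ≥0∞} (hf : Tendsto f (𝓝 0) (𝓝 0)) {ε : ℝ≥0∞}
    (hε : 0 < ε) : ∃ δ : ℝ, 0 < δ ∧ f δ < ε :=
  (((hf.mono_left nhdsWithin_le_nhds).eventually (gt_mem_nhds hε)).and
    (self_mem_nhdsWithin (s := Ioi 0))).exists.imp fun _ h => ⟨h.2, h.1⟩

lemma eventually_forall_lt_of_le_mul_add_mul {ι κ : Type*} {l : Filter κ} {S : Set ι}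
    {I J : κ → ι → ℝ≥0∞} {D : κ → ℝ≥0∞} {A B : ℝ≥0∞} (hA : A ≠ ∞) (hB : B ≠ ∞)
    (hJ : ∀ ε : ℝ, 0 < ε → ∀ᶠ T in l, ∀ τ ∈ S, J T τ < ENNReal.ofReal ε)
    (hD : Tendsto D l (𝓝 0)) (hI : ∀ᶠ T in l, ∀ τ ∈ S, I T τ ≤ A * J T τ + B * D T) :
    ∀ ε : ℝ, 0 < ε → ∀ᶠ T in l, ∀ τ ∈ S, I T τ < ENNReal.ofReal ε := by
  intro ε hε
  obtain ⟨δ, hδ, hδε⟩ : ∃ δ : ℝ, 0 < δ ∧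
      A * ENNReal.ofReal δ + B * ENNReal.ofReal δ < ENNReal.ofReal ε := by
    refine exists_pos_lt_of_tendsto_zero ?_ (ENNReal.ofReal_pos.2 hε)
    have hδ0 : Tendsto (fun δ : ℝ => ENNReal.ofReal δ) (𝓝 0) (𝓝 0) := by
      simpa using ENNReal.tendsto_ofReal (tendsto_id (x := 𝓝 (0 : ℝ)))
    simpa using (ENNReal.Tendsto.const_mul hδ0 (Or.inr hA)).add
      (ENNReal.Tendsto.const_mul hδ0 (Or.inr hB))
  filter_upwards [hJ δ hδ, hD.eventually (gt_mem_nhds (ENNReal.ofReal_pos.2 hδ)), hI]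
    with T hJT hDT hIT τ hτ
  calc I T τ ≤ A * J T τ + B * D T := hIT τ hτ
    _ ≤ A * ENNReal.ofReal δ + B * ENNReal.ofReal δ := by gcongr; exact (hJT τ hτ).le
    _ < ENNReal.ofReal ε := hδε

lemma exists_Icc_subset_Ioo_inv {a b : ℝ} (ha : 0 < a) : ∃ r : ℝ, Icc a b ⊆ Ioo r⁻¹ r := by
  refine ⟨a⁻¹ + b + 1, fun x hx => ?_⟩
  have hb : 0 < b := ha.trans_le (hx.1.trans hx.2)
  have ha' : 0 < a⁻¹ := inv_pos.2 ha
  exact ⟨(inv_lt_of_inv_lt₀ ha (by linarith)).trans_le hx.1, by linarith [hx.2]⟩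

section SobolevMeasure

variable {E : Type*} [NormedAddCommGroup E]

lemma continuous_one_add_norm_sq_rpow (s : ℝ) : Continuous fun ξ : E => (1 + ‖ξ‖ ^ 2) ^ s :=
  (by fun_prop : Continuous fun ξ : E => 1 + ‖ξ‖ ^ 2).rpow_const fun _ => Or.inl (by positivity)

variable [MeasureSpace E]

/-- `L²(sobolevMeasure s)` is the Fourier image of the Sobolev space `H^s`. -/
noncomputable def sobolevMeasure (s : ℝ) : Measure E :=
  volume.withDensity fun ξ => ENNReal.ofReal ((1 + ‖ξ‖ ^ 2) ^ s)

variable [BorelSpace E]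

lemma lintegral_sobolevMeasure (s : ℝ) (g : E → ℝ≥0∞) :
    ∫⁻ ξ, g ξ ∂sobolevMeasure s = ∫⁻ ξ, ENNReal.ofReal ((1 + ‖ξ‖ ^ 2) ^ s) * g ξ :=
  lintegral_withDensity_eq_lintegral_mul_non_measurable _
    (ENNReal.measurable_ofReal.comp (continuous_one_add_norm_sq_rpow s).measurable)
    (ae_of_all _ fun _ => ENNReal.ofReal_lt_top) g

instance [IsLocallyFiniteMeasure (volume : Measure E)] (s : ℝ) :
    IsLocallyFiniteMeasure (sobolevMeasure (E := E) s) :=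
  IsLocallyFiniteMeasure.withDensity_ofReal (continuous_one_add_norm_sq_rpow s)

variable {F : Type*} [NormedAddCommGroup F] [NormedSpace ℝ E] [FiniteDimensional ℝ E]
  [(volume : Measure E).IsAddHaarMeasure]

lemma lintegral_comp_smul_sobolevMeasure_le (s : ℝ) {r a : ℝ} (ha : 0 < a) (har : a ∈ Icc r⁻¹ r)
    (g : E → ℝ≥0∞) :
    ∫⁻ ξ, g (a • ξ) ∂sobolevMeasure s
      ≤ ENNReal.ofReal (r ^ finrank ℝ E * (r ^ 2) ^ |s|) * ∫⁻ ξ, g ξ ∂sobolevMeasure s := by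
  have hr : 0 < r := ha.trans_le har.2
  set w : E → ℝ≥0∞ := fun ξ => ENNReal.ofReal ((1 + ‖ξ‖ ^ 2) ^ s)
  have hcov : ∫⁻ ξ, w ξ * g (a • ξ)
      = ENNReal.ofReal |(a ^ finrank ℝ E)⁻¹| * ∫⁻ ζ, w (a⁻¹ • ζ) * g ζ := by
    rw [← smul_eq_mul, ← lintegral_smul_measure, ← Measure.map_addHaar_smul volume ha.ne',
      ← MeasurableEquiv.coe_smul₀ ha.ne', lintegral_map_equiv]
    simp [inv_smul_smul₀ ha.ne']
  have hpow : |(a ^ finrank ℝ E)⁻¹| ≤ r ^ finrank ℝ E := by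
    rw [abs_of_pos (by positivity), ← inv_pow]
    exact pow_le_pow_left₀ (by positivity) (inv_mem_Icc_inv ha har).2 _
  have hweight : ∀ ζ, w (a⁻¹ • ζ) ≤ ENNReal.ofReal ((r ^ 2) ^ |s|) * w ζ := fun ζ => by
    rw [← ENNReal.ofReal_mul (by positivity)]
    exact ENNReal.ofReal_le_ofReal
      (one_add_norm_smul_sq_rpow_le (inv_pos.2 ha) (inv_mem_Icc_inv ha har) s ζ)
  calc ∫⁻ ξ, g (a • ξ) ∂sobolevMeasure s
      = ENNReal.ofReal |(a ^ finrank ℝ E)⁻¹| * ∫⁻ ζ, w (a⁻¹ • ζ) * g ζ := by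
        rw [lintegral_sobolevMeasure, hcov]
    _ ≤ ENNReal.ofReal (r ^ finrank ℝ E) * ∫⁻ ζ, ENNReal.ofReal ((r ^ 2) ^ |s|) * (w ζ * g ζ) := by
        refine mul_le_mul' (ENNReal.ofReal_le_ofReal hpow) (lintegral_mono fun ζ => ?_)
        rw [← mul_assoc]
        exact mul_le_mul_left (hweight ζ) _
    _ = _ := by
        rw [lintegral_const_mul' _ _ ENNReal.ofReal_ne_top, lintegral_sobolevMeasure,
          ENNReal.ofReal_mul (by positivity), mul_assoc]

lemma lintegral_sobolevMeasure_rescale_le [MeasurableSpace F] [BorelSpace F]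
    [SecondCountableTopology F] {s : ℝ} {V W : E → F} (hV : Measurable V) (hW : Measurable W)
    {k l b r : ℝ} (C : ℝ) (hk : k ≠ 0) (ha : 0 < l / k) (har : l / k ∈ Icc r⁻¹ r) (hb : 0 < b)
    (hbr : b ∈ Icc r⁻¹ r) :
    ∫⁻ ξ, ‖V (l⁻¹ • ξ) - W ((b / C) • ξ)‖ₑ ^ 2 ∂sobolevMeasure s
      ≤ 2 * ENNReal.ofReal (r ^ finrank ℝ E * (r ^ 2) ^ |s|) *
          ∫⁻ ξ, ‖V (k⁻¹ • ξ) - W (b • ξ)‖ₑ ^ 2 ∂sobolevMeasure s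
        + 2 * ENNReal.ofReal (r ^ finrank ℝ E * (r ^ 2) ^ |s|) ^ 2 *
          ∫⁻ ξ, ‖W ξ - W ((l / k / C) • ξ)‖ₑ ^ 2 ∂sobolevMeasure s := by
  set a := l / k
  set K := ENNReal.ofReal (r ^ finrank ℝ E * (r ^ 2) ^ |s|)
  have hl : l ≠ 0 := by rintro rfl; simp [a] at ha
  calc ∫⁻ ξ, ‖V (l⁻¹ • ξ) - W ((b / C) • ξ)‖ₑ ^ 2 ∂sobolevMeasure s
      = ∫⁻ ξ, (fun η => ‖V (k⁻¹ • η) - W ((b * (a / C)) • η)‖ₑ ^ 2) (a⁻¹ • ξ)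
          ∂sobolevMeasure s := by
        refine lintegral_congr fun ξ => ?_
        simp only [smul_smul]
        congr 5 <;> simp only [a] <;> field_simp
    _ ≤ K * ∫⁻ η, ‖V (k⁻¹ • η) - W ((b * (a / C)) • η)‖ₑ ^ 2 ∂sobolevMeasure s :=
        lintegral_comp_smul_sobolevMeasure_le s (inv_pos.2 ha) (inv_mem_Icc_inv ha har) _
    _ ≤ K * (2 * ∫⁻ η, ‖V (k⁻¹ • η) - W (b • η)‖ₑ ^ 2 ∂sobolevMeasure s
          + 2 * ∫⁻ η, ‖W (b • η) - W ((b * (a / C)) • η)‖ₑ ^ 2 ∂sobolevMeasure s) := by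
        gcongr
        exact lintegral_enorm_sub_sq_le (hV.comp (measurable_const_smul _)).aestronglyMeasurable
          (hW.comp (measurable_const_smul _)).aestronglyMeasurable
    _ ≤ K * (2 * ∫⁻ η, ‖V (k⁻¹ • η) - W (b • η)‖ₑ ^ 2 ∂sobolevMeasure s
          + 2 * (K * ∫⁻ ζ, ‖W ζ - W ((a / C) • ζ)‖ₑ ^ 2 ∂sobolevMeasure s)) := by
        gcongr
        simp_rw [mul_comm b, ← smul_smul]
        exact lintegral_comp_smul_sobolevMeasure_le s hb hbr (fun ζ => ‖W ζ - W ((a / C) • ζ)‖ₑ ^ 2)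
    _ = _ := by ring

variable [NormedSpace ℝ F]

lemma tendsto_lintegral_sobolevMeasure_sub_comp_smul {s : ℝ} {W : E → F}
    (hW : MemLp W 2 (sobolevMeasure s)) :
    Tendsto (fun β : ℝ => ∫⁻ ξ, ‖W ξ - W (β • ξ)‖ₑ ^ 2 ∂sobolevMeasure s) (𝓝 1) (𝓝 0) := by
  set μ : Measure E := sobolevMeasure s
  set K := ENNReal.ofReal (2 ^ finrank ℝ E * (2 ^ 2) ^ |s|)
  rw [ENNReal.tendsto_nhds_zero]
  intro ε hε
  obtain ⟨δ, hδ, hδε⟩ : ∃ δ : ℝ, 0 < δ ∧ (2 + 4 * K) * ENNReal.ofReal δ ^ 2 < ε / 2 := by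
    refine exists_pos_lt_of_tendsto_zero ?_ (ENNReal.half_pos hε.ne')
    simpa using ENNReal.Tendsto.const_mul (((ENNReal.continuous_pow 2).comp
      ENNReal.continuous_ofReal).tendsto' 0 0 (by simp)) (Or.inr (by finiteness))
  obtain ⟨g, hgc, hWg, hg, -⟩ :=
    hW.exists_hasCompactSupport_eLpNorm_sub_le (by norm_num) (ENNReal.ofReal_pos.2 hδ).ne'
  have hWg2 : ∫⁻ ξ, ‖W ξ - g ξ‖ₑ ^ 2 ∂μ ≤ ENNReal.ofReal δ ^ 2 := by
    rw [show (fun ξ => ‖W ξ - g ξ‖ₑ ^ 2) = fun ξ => ‖(W - g) ξ‖ₑ ^ 2 from rfl,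
      lintegral_enorm_sq_eq_eLpNorm_sq]
    gcongr
  have hgβ : ∀ᶠ β in 𝓝 (1 : ℝ), 4 * ∫⁻ ξ, ‖g ξ - g (β • ξ)‖ₑ ^ 2 ∂μ < ε / 2 := by
    have := ENNReal.Tendsto.const_mul
      (hgc.tendsto_lintegral_enorm_sub_comp_smul_sq (μ := μ) hg)
      (Or.inr (by norm_num : (4 : ℝ≥0∞) ≠ ∞))
    rw [mul_zero] at this
    exact this.eventually (gt_mem_nhds (ENNReal.half_pos hε.ne'))
  filter_upwards [Icc_mem_nhds (by norm_num : (2 : ℝ)⁻¹ < 1) (by norm_num : (1 : ℝ) < 2), hgβ]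
    with β hβ hgβ
  have hdil : ∫⁻ ξ, ‖g (β • ξ) - W (β • ξ)‖ₑ ^ 2 ∂μ ≤ K * ∫⁻ ξ, ‖W ξ - g ξ‖ₑ ^ 2 ∂μ := by
    simp_rw [enorm_sub_rev (g _)]
    exact lintegral_comp_smul_sobolevMeasure_le s (by linarith [hβ.1]) hβ
      (fun ζ => ‖W ζ - g ζ‖ₑ ^ 2)
  calc ∫⁻ ξ, ‖W ξ - W (β • ξ)‖ₑ ^ 2 ∂μ
      ≤ 2 * ∫⁻ ξ, ‖W ξ - g ξ‖ₑ ^ 2 ∂μ + 2 * ∫⁻ ξ, ‖g ξ - W (β • ξ)‖ₑ ^ 2 ∂μ :=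
        lintegral_enorm_sub_sq_le hW.1 hg.aestronglyMeasurable
    _ ≤ 2 * ∫⁻ ξ, ‖W ξ - g ξ‖ₑ ^ 2 ∂μ + 2 * (2 * ∫⁻ ξ, ‖g ξ - g (β • ξ)‖ₑ ^ 2 ∂μ
          + 2 * (K * ∫⁻ ξ, ‖W ξ - g ξ‖ₑ ^ 2 ∂μ)) := by
        gcongr
        refine (lintegral_enorm_sub_sq_le (g := fun ξ => g (β • ξ)) hg.aestronglyMeasurable
          (hg.comp (continuous_const_smul β)).aestronglyMeasurable).trans ?_
        gcongr
    _ = (2 + 4 * K) * ∫⁻ ξ, ‖W ξ - g ξ‖ₑ ^ 2 ∂μ + 4 * ∫⁻ ξ, ‖g ξ - g (β • ξ)‖ₑ ^ 2 ∂μ := by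
        ring
    _ ≤ ε / 2 + ε / 2 := add_le_add ((mul_le_mul_right hWg2 _).trans hδε.le) hgβ.le
    _ = ε := ENNReal.add_halves ε

end SobolevMeasure

theorem rescaling_asymptotically_proportional_general
    (n : ℕ) (s : ℝ) (α : ℝ) (hα : 0 ≤ α) (C : ℝ) (hC : 0 < C)
    (k l : ℝ → ℝ) (hkpos : ∀ t : ℝ, 0 ≤ t → 0 < k t) (hlpos : ∀ t : ℝ, 0 ≤ t → 0 < l t)
    (hlk : Tendsto (fun t => l t / k t) atTop (nhds C))
    (v : ℝ → EuclideanSpace ℝ (Fin n) → ℂ) (hv : ∀ t : ℝ, Measurable (v t))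
    (W : EuclideanSpace ℝ (Fin n) → ℂ) (hWmeas : Measurable W)
    (hW : ∫⁻ ξ : EuclideanSpace ℝ (Fin n),
        ENNReal.ofReal ((1 + ‖ξ‖ ^ 2) ^ s) * (‖W ξ‖₊ : ℝ≥0∞) ^ 2 < ⊤)
    (hconv : ∀ c d : ℝ, 0 < c → c < d → ∀ ε : ℝ, 0 < ε → ∀ᶠ T in atTop,
      ∀ τ ∈ Icc c d,
        (∫⁻ ξ : EuclideanSpace ℝ (Fin n),
            ENNReal.ofReal ((1 + ‖ξ‖ ^ 2) ^ s) *
              (‖v (T * τ) ((k T)⁻¹ • ξ) - W ((τ ^ α) • ξ)‖₊ : ℝ≥0∞) ^ 2)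
          < ENNReal.ofReal ε) :
    ∀ c d : ℝ, 0 < c → c < d → ∀ ε : ℝ, 0 < ε → ∀ᶠ T in atTop,
      ∀ τ ∈ Icc c d,
        (∫⁻ ξ : EuclideanSpace ℝ (Fin n),
            ENNReal.ofReal ((1 + ‖ξ‖ ^ 2) ^ s) *
              (‖v (T * τ) ((l T)⁻¹ • ξ) - W ((τ ^ α / C) • ξ)‖₊ : ℝ≥0∞) ^ 2)
          < ENNReal.ofReal ε := by
  intro c d hc hcd
  simp only [← enorm_eq_nnnorm, ← lintegral_sobolevMeasure] at hW hconv ⊢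
  obtain ⟨r, hr⟩ := exists_Icc_subset_Ioo_inv (b := max C (d ^ α))
    (lt_min hC (Real.rpow_pos_of_pos hc α))
  have hCr := hr ⟨min_le_left _ _, le_max_left _ _⟩
  have hW2 : MemLp W 2 (sobolevMeasure s) :=
    ⟨hWmeas.aestronglyMeasurable, by simpa [lintegral_enorm_sq_eq_eLpNorm_sq] using hW⟩
  have hβ : Tendsto (fun T => l T / k T / C) atTop (𝓝 1) := by
    simpa [hC.ne'] using hlk.div_const C
  set K := ENNReal.ofReal (r ^ finrank ℝ (EuclideanSpace ℝ (Fin n)) * (r ^ 2) ^ |s|)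
  refine eventually_forall_lt_of_le_mul_add_mul (A := 2 * K) (B := 2 * K ^ 2) (by finiteness)
    (by finiteness) (hconv c d hc hcd)
    ((tendsto_lintegral_sobolevMeasure_sub_comp_smul hW2).comp hβ) ?_
  filter_upwards [eventually_ge_atTop 0, hlk.eventually (Ioo_mem_nhds hCr.1 hCr.2)]
    with T hT hlkT τ hτ
  have hτ0 : 0 < τ := hc.trans_le hτ.1
  have hτr : τ ^ α ∈ Ioo r⁻¹ r := hr ⟨(min_le_right _ _).trans (Real.rpow_le_rpow hc.le hτ.1 hα),
    (Real.rpow_le_rpow hτ0.le hτ.2 hα).trans (le_max_right _ _)⟩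
  exact lintegral_sobolevMeasure_rescale_le (hv _) hWmeas C (hkpos T hT).ne'
    (div_pos (hlpos T hT) (hkpos T hT)) (Ioo_subset_Icc_self hlkT) (Real.rpow_pos_of_pos hτ0 α)
    (Ioo_subset_Icc_self hτr)

/-- Proposition 2.2, on the Fourier side: if the rescaling with `k` converges
locally uniformly in `H^s` to the self-similar profile with Fourier transform `W(τ^α ξ)`, and
`l/k → C ∈ (0,∞)` with `k, l` regularly varying of index `α`, then the rescaling with `l`
converges locally uniformly in `H^s` to the profile with Fourier transform `W(τ^α ξ / C)`. -/
theorem rescaling_asymptotically_proportional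
    (n : ℕ) (hn : 1 ≤ n) (s : ℝ) (α : ℝ) (hα : 0 ≤ α) (C : ℝ) (hC : 0 < C)
    (k l : ℝ → ℝ) (hkpos : ∀ t : ℝ, 0 ≤ t → 0 < k t) (hlpos : ∀ t : ℝ, 0 ≤ t → 0 < l t)
    (hkreg : ∀ τ : ℝ, 0 < τ → Tendsto (fun T => k (T * τ) / k T) atTop (nhds (τ ^ α)))
    (hlreg : ∀ τ : ℝ, 0 < τ → Tendsto (fun T => l (T * τ) / l T) atTop (nhds (τ ^ α)))
    (hlk : Tendsto (fun t => l t / k t) atTop (nhds C))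
    (v : ℝ → EuclideanSpace ℝ (Fin n) → ℂ) (hv : ∀ t : ℝ, Measurable (v t))
    (W : EuclideanSpace ℝ (Fin n) → ℂ) (hWmeas : Measurable W)
    (hW : ∫⁻ ξ : EuclideanSpace ℝ (Fin n),
        ENNReal.ofReal ((1 + ‖ξ‖ ^ 2) ^ s) * (‖W ξ‖₊ : ℝ≥0∞) ^ 2 < ⊤)
    (hconv : ∀ c d : ℝ, 0 < c → c < d → ∀ ε : ℝ, 0 < ε → ∀ᶠ T in atTop,
      ∀ τ ∈ Icc c d,
        (∫⁻ ξ : EuclideanSpace ℝ (Fin n),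
            ENNReal.ofReal ((1 + ‖ξ‖ ^ 2) ^ s) *
              (‖v (T * τ) ((k T)⁻¹ • ξ) - W ((τ ^ α) • ξ)‖₊ : ℝ≥0∞) ^ 2)
          < ENNReal.ofReal ε) :
    ∀ c d : ℝ, 0 < c → c < d → ∀ ε : ℝ, 0 < ε → ∀ᶠ T in atTop,
      ∀ τ ∈ Icc c d,
        (∫⁻ ξ : EuclideanSpace ℝ (Fin n),
            ENNReal.ofReal ((1 + ‖ξ‖ ^ 2) ^ s) *
              (‖v (T * τ) ((l T)⁻¹ • ξ) - W ((τ ^ α / C) • ξ)‖₊ : ℝ≥0∞) ^ 2)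
          < ENNReal.ofReal ε :=
  rescaling_asymptotically_proportional_general n s α hα C hC k l hkpos hlpos hlk v hv W hWmeas hW
    hconv
end

section
/- Let T₀ > 0 and let (A_n)_{n≥1} and A_∞ be real-valued functions in L¹(0,T₀) with ‖A_n − A_∞‖_{L¹(0,T₀)} → 0 as n → ∞. For each ρ ≥ 0 and each n ∈ ℕ ∪ {∞}, the Volterra integral equation w(t) + ρ ∫₀ᵗ A_n(t−σ) w(σ) dσ = 1 has a unique continuous solution w_n(ρ,·) on [0,T₀], and sup_{t∈[0,T₀]} |w_n(ρ,t) − w_∞(ρ,t)| → 0 as n → ∞, uniformly for ρ in compact subsets of [0,∞). -/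
open MeasureTheory Set Filter intervalIntegral

/-- `IsVolterraSol T₀ B ρ w` : `w` is a continuous solution on `[0,T₀]` of the
Volterra equation `w(t) + ρ ∫₀ᵗ B(t−σ) w(σ) dσ = 1`. -/
def IsVolterraSol (T₀ : ℝ) (B : ℝ → ℝ) (ρ : ℝ) (w : ℝ → ℝ) : Prop :=
  ContinuousOn w (Icc 0 T₀) ∧
    ∀ t ∈ Icc (0:ℝ) T₀, w t + ρ * ∫ σ in (0:ℝ)..t, B (t - σ) * w σ = 1

/-!
Multiplying the equation by `e^{-l t}` turns it into the same kind of equation for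
`e^{-l t} w(t)`, with kernel `e^{-l s} B(s)` and right-hand side `e^{-l t}`. Since
`∫₀^{T₀} e^{-l s} |B(s)| ds → 0` as `l → ∞`, for large `l` the weighted equation reads
`v + T v = f` on `C([0,T₀])` with `‖T‖ ≤ 1/2`: it is solved by a Neumann series, and two such
equations satisfy `‖v - v'‖ ≤ 4 ‖T - T'‖ ‖f‖` with `‖T - T'‖ ≤ |ρ| ‖B - B'‖_{L¹}`. One weight `l`
serves all `ρ ∈ [0,R]` and all kernels `L¹`-close to `A_∞`, which makes the convergence uniform.
-/

open Topology

section
variable {𝕜 E : Type*} [NontriviallyNormedField 𝕜] [NormedAddCommGroup E] [NormedSpace 𝕜 E]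

theorem exists_add_apply_eq_of_norm_lt_one [CompleteSpace E] {T : E →L[𝕜] E} (hT : ‖T‖ < 1)
    (f : E) : ∃ x, x + T x = f := by
  let u := Units.oneSub (-T) (by rwa [norm_neg])
  refine ⟨(↑u⁻¹ : E →L[𝕜] E) f, ?_⟩
  simpa [u, Units.val_oneSub] using congr($(u.mul_inv) f)

theorem norm_sub_le_of_add_apply_eq {T S : E →L[𝕜] E} (hT : ‖T‖ ≤ 1 / 2)
    (hS : ‖S‖ ≤ 1 / 2) {x y f : E} (hx : x + T x = f) (hy : y + S y = f) :
    ‖x - y‖ ≤ 4 * ‖T - S‖ * ‖f‖ := by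
  have hy_le : ‖y‖ ≤ ‖f‖ + ‖S‖ * ‖y‖ :=
    calc ‖y‖ = ‖f - S y‖ := by rw [← hy, add_sub_cancel_right]
      _ ≤ ‖f‖ + ‖S‖ * ‖y‖ := (norm_sub_le _ _).trans (by gcongr; exact S.le_opNorm y)
  have hxy_le : ‖x - y‖ ≤ ‖T‖ * ‖x - y‖ + ‖T - S‖ * ‖y‖ :=
    calc ‖x - y‖ = ‖T (x - y) + (T - S) y‖ := by
          rw [← norm_neg, map_sub, sub_apply]
          congr 1
          linear_combination (norm := abel) hy - hx
      _ ≤ ‖T‖ * ‖x - y‖ + ‖T - S‖ * ‖y‖ :=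
          (norm_add_le _ _).trans (by gcongr <;> apply ContinuousLinearMap.le_opNorm)
  have hy_bound : ‖y‖ ≤ 2 * ‖f‖ := by nlinarith [norm_nonneg y]
  have hxy_bound : ‖x - y‖ ≤ 2 * ‖T - S‖ * ‖y‖ := by nlinarith [norm_nonneg (x - y)]
  calc ‖x - y‖ ≤ 2 * ‖T - S‖ * ‖y‖ := hxy_bound
    _ ≤ 4 * ‖T - S‖ * ‖f‖ := by nlinarith [norm_nonneg (T - S)]
end

noncomputable section

def volterraConv (K V : ℝ → ℝ) (t : ℝ) : ℝ := ∫ s in (0:ℝ)..t, K s * V (t - s)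

theorem integral_comp_sub_mul_eq_volterraConv (K V : ℝ → ℝ) (t : ℝ) :
    ∫ σ in (0:ℝ)..t, K (t - σ) * V σ = volterraConv K V t := by
  simpa [volterraConv] using
    integral_comp_sub_left (fun s => K s * V (t - s)) t (a := 0) (b := t)

theorem isVolterraSol_iff_volterraConv {T₀ ρ : ℝ} {K w : ℝ → ℝ} :
    IsVolterraSol T₀ K ρ w ↔
      ContinuousOn w (Icc 0 T₀) ∧ ∀ t ∈ Icc 0 T₀, w t + ρ * volterraConv K w t = 1 := by
  simp only [IsVolterraSol, integral_comp_sub_mul_eq_volterraConv]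

variable {T₀ t : ℝ} {K K' V V' : ℝ → ℝ}

theorem intervalIntegrable_mul_comp_sub (hK : IntegrableOn K (Ioc 0 T₀))
    (hV : ContinuousOn V (Icc 0 T₀)) (ht : t ∈ Icc 0 T₀) :
    IntervalIntegrable (fun s => K s * V (t - s)) volume 0 t := by
  rw [intervalIntegrable_iff_integrableOn_Ioc_of_le ht.1]
  refine (hK.mono_set (Ioc_subset_Ioc_right ht.2)).mul_continuousOn_of_subset
    (hV.comp (by fun_prop) fun s hs => ?_) measurableSet_Ioc isCompact_Icc Ioc_subset_Icc_self
  exact ⟨by linarith [hs.2], by linarith [hs.1, ht.2]⟩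

theorem volterraConv_congr (ht : 0 ≤ t) (h : EqOn V V' (Icc 0 t)) :
    volterraConv K V t = volterraConv K V' t := by
  refine integral_congr fun s hs => ?_
  rw [uIcc_of_le ht] at hs
  simp only [h ⟨sub_nonneg.2 hs.2, by linarith [hs.1]⟩]

theorem abs_volterraConv_le (hK : IntegrableOn K (Ioc 0 T₀)) (ht : t ∈ Icc 0 T₀) {M : ℝ}
    (hV : ∀ σ ∈ Icc 0 t, |V σ| ≤ M) :
    |volterraConv K V t| ≤ (∫ s in Ioc 0 T₀, |K s|) * M := by
  have hM : 0 ≤ M := (abs_nonneg _).trans (hV t ⟨ht.1, le_rfl⟩)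
  calc |volterraConv K V t| ≤ ∫ s in (0:ℝ)..t, |K s| * M := by
        rw [← Real.norm_eq_abs]
        refine norm_integral_le_of_norm_le ht.1 (ae_of_all _ fun s hs => ?_) ?_
        · rw [Real.norm_eq_abs, abs_mul]
          exact mul_le_mul_of_nonneg_left (hV _ ⟨by linarith [hs.2], by linarith [hs.1]⟩)
            (abs_nonneg _)
        · rw [intervalIntegrable_iff_integrableOn_Ioc_of_le ht.1]
          exact (hK.mono_set (Ioc_subset_Ioc_right ht.2)).abs.mul_const M
    _ ≤ (∫ s in Ioc 0 T₀, |K s|) * M := by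
        rw [integral_of_le ht.1, MeasureTheory.integral_mul_const]
        exact mul_le_mul_of_nonneg_right (setIntegral_mono_set hK.abs
          (ae_of_all _ fun s => abs_nonneg _) (Ioc_subset_Ioc_right ht.2).eventuallyLE) hM

theorem continuousOn_volterraConv (hK : IntegrableOn K (Ioc 0 T₀)) (hV : Continuous V) :
    ContinuousOn (volterraConv K V) (Icc 0 T₀) := by
  obtain ⟨M, hM⟩ :=
    (isCompact_Icc (a := 0) (b := T₀)).exists_bound_of_continuousOn hV.continuousOn
  let F : ℝ → ℝ → ℝ := fun t s => (Iic t).indicator (fun s => K s * V (t - s)) s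
  have hF : EqOn (fun t => ∫ s in Ioc 0 T₀, F t s) (volterraConv K V) (Icc 0 T₀) := by
    intro t ht
    simp only [F, volterraConv, integral_of_le ht.1]
    rw [setIntegral_indicator measurableSet_Iic, Ioc_inter_Iic, min_eq_right ht.2]
  refine ContinuousOn.congr (fun t₀ ht₀ => ?_) hF.symm
  refine continuousWithinAt_of_dominated (bound := fun s => |K s| * M) ?_ ?_
    (hK.abs.mul_const M) ?_
  · exact Eventually.of_forall fun t =>
      (hK.1.mul (hV.comp (by fun_prop)).aestronglyMeasurable).indicator measurableSet_Iic
  · filter_upwards [self_mem_nhdsWithin] with t ht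
    filter_upwards [ae_restrict_mem measurableSet_Ioc] with s hs
    by_cases hst : s ≤ t
    · simp only [F, indicator_of_mem (show s ∈ Iic t from hst), norm_mul, Real.norm_eq_abs]
      exact mul_le_mul_of_nonneg_left (hM _ ⟨by linarith, by linarith [hs.1, ht.2]⟩)
        (abs_nonneg _)
    · simp only [F, indicator_of_notMem (show s ∉ Iic t from hst), norm_zero]
      exact mul_nonneg (abs_nonneg _) ((norm_nonneg _).trans (hM 0 ⟨le_rfl, ht₀.1.trans ht₀.2⟩))
  -- `t ↦ F t s` jumps only at `t = s`, and `{t₀}` is a null set of `s`.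
  · filter_upwards [ae_restrict_of_ae (volume.ae_ne t₀)] with s hs
    refine ContinuousAt.continuousWithinAt ?_
    rcases hs.lt_or_gt with hlt | hgt
    · have : ∀ᶠ t in 𝓝 t₀, F t s = K s * V (t - s) := by
        filter_upwards [eventually_gt_nhds hlt] with t ht
        exact indicator_of_mem (show s ∈ Iic t from ht.le) _
      exact (continuousAt_congr this).2 (by fun_prop)
    · have : ∀ᶠ t in 𝓝 t₀, F t s = 0 := by
        filter_upwards [eventually_lt_nhds hgt] with t ht
        exact indicator_of_notMem (show s ∉ Iic t from not_le.2 ht) _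
      exact (continuousAt_congr this).2 continuousAt_const

theorem volterraConv_add (hK : IntegrableOn K (Ioc 0 T₀)) (hV : ContinuousOn V (Icc 0 T₀))
    (hV' : ContinuousOn V' (Icc 0 T₀)) (ht : t ∈ Icc 0 T₀) :
    volterraConv K (V + V') t = volterraConv K V t + volterraConv K V' t := by
  simp only [volterraConv, Pi.add_apply, mul_add]
  exact integral_add (intervalIntegrable_mul_comp_sub hK hV ht)
    (intervalIntegrable_mul_comp_sub hK hV' ht)

theorem volterraConv_smul (c : ℝ) : volterraConv K (c • V) t = c * volterraConv K V t := by
  simp only [volterraConv, Pi.smul_apply, smul_eq_mul, mul_left_comm _ c,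
    intervalIntegral.integral_const_mul]

theorem volterraConv_sub_left (hK : IntegrableOn K (Ioc 0 T₀))
    (hK' : IntegrableOn K' (Ioc 0 T₀)) (hV : ContinuousOn V (Icc 0 T₀)) (ht : t ∈ Icc 0 T₀) :
    volterraConv (K - K') V t = volterraConv K V t - volterraConv K' V t := by
  simp only [volterraConv, Pi.sub_apply, sub_mul]
  exact integral_sub (intervalIntegrable_mul_comp_sub hK hV ht)
    (intervalIntegrable_mul_comp_sub hK' hV ht)

def expWeighted (l : ℝ) (f : ℝ → ℝ) (s : ℝ) : ℝ := Real.exp (-(l * s)) * f s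

theorem expWeighted_volterraConv (l : ℝ) (K V : ℝ → ℝ) (t : ℝ) :
    expWeighted l (volterraConv K V) t = volterraConv (expWeighted l K) (expWeighted l V) t := by
  simp only [expWeighted, volterraConv, ← intervalIntegral.integral_const_mul]
  refine integral_congr fun s _ => ?_
  rw [show -(l * t) = -(l * s) + -(l * (t - s)) by ring, Real.exp_add]
  ring

theorem integrableOn_expWeighted (hK : IntegrableOn K (Ioc 0 T₀)) (l : ℝ) :
    IntegrableOn (expWeighted l K) (Ioc 0 T₀) :=
  hK.continuousOn_mul_of_subset
    (by fun_prop : Continuous fun s => Real.exp (-(l * s))).continuousOn isCompact_Icc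
    measurableSet_Ioc Ioc_subset_Icc_self

theorem abs_expWeighted_le {l s : ℝ} (hl : 0 ≤ l) (hs : 0 ≤ s) (f : ℝ → ℝ) :
    |expWeighted l f s| ≤ |f s| := by
  rw [expWeighted, abs_mul, Real.abs_exp]
  exact mul_le_of_le_one_left (abs_nonneg _) (Real.exp_le_one_iff.2 (by nlinarith))

theorem integral_abs_expWeighted_le (hK : IntegrableOn K (Ioc 0 T₀)) {l : ℝ} (hl : 0 ≤ l) :
    ∫ s in Ioc 0 T₀, |expWeighted l K s| ≤ ∫ s in Ioc 0 T₀, |K s| :=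
  setIntegral_mono_on (integrableOn_expWeighted hK l).abs hK.abs measurableSet_Ioc
    fun _ hs => abs_expWeighted_le hl hs.1.le K

theorem tendsto_integral_abs_expWeighted (hK : IntegrableOn K (Ioc 0 T₀)) :
    Tendsto (fun l => ∫ s in Ioc 0 T₀, |expWeighted l K s|) atTop (𝓝 0) := by
  have hlim : ∀ s ∈ Ioc 0 T₀, Tendsto (fun l => |expWeighted l K s|) atTop (𝓝 0) := by
    intro s hs
    have : Tendsto (fun l => Real.exp (-(l * s))) atTop (𝓝 0) :=
      Real.tendsto_exp_atBot.comp
        (tendsto_neg_atTop_atBot.comp (tendsto_id.atTop_mul_const hs.1))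
    simpa [expWeighted, abs_mul] using this.mul_const |K s|
  simpa using tendsto_integral_filter_of_dominated_convergence (fun s => |K s|)
    (Eventually.of_forall fun l => (integrableOn_expWeighted hK l).abs.aestronglyMeasurable)
    ((eventually_ge_atTop 0).mono fun l hl => (ae_restrict_mem measurableSet_Ioc).mono
      fun s hs => by simpa using abs_expWeighted_le hl hs.1.le K)
    hK.abs ((ae_restrict_mem measurableSet_Ioc).mono hlim)

theorem exists_mul_integral_abs_expWeighted_le (hK : IntegrableOn K (Ioc 0 T₀)) (c : ℝ)
    {δ : ℝ} (hδ : 0 < δ) : ∃ l, 0 ≤ l ∧ c * ∫ s in Ioc 0 T₀, |expWeighted l K s| ≤ δ :=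
  ((eventually_ge_atTop 0).and (((tendsto_integral_abs_expWeighted hK).const_mul c).eventually
    (eventually_le_nhds (by rwa [mul_zero])))).exists

def volterraOp (h : 0 ≤ T₀) (K : ℝ → ℝ) (hK : IntegrableOn K (Ioc 0 T₀)) :
    C(Icc 0 T₀, ℝ) →L[ℝ] C(Icc 0 T₀, ℝ) :=
  LinearMap.mkContinuous
    { toFun := fun v => ⟨fun t => volterraConv K (IccExtend h v) t,
        (continuousOn_volterraConv hK v.continuous.Icc_extend').comp_continuous
          continuous_subtype_val Subtype.prop⟩
      map_add' := fun v w => ContinuousMap.ext fun t =>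
        volterraConv_add hK v.continuous.Icc_extend'.continuousOn
          w.continuous.Icc_extend'.continuousOn t.2
      map_smul' := fun c v =>
        ContinuousMap.ext fun _ => volterraConv_smul (V := IccExtend h v) c }
    (∫ s in Ioc 0 T₀, |K s|) fun v => (ContinuousMap.norm_le _ (by positivity)).2 fun t =>
      abs_volterraConv_le hK t.2 fun σ _ => v.norm_coe_le_norm _

theorem norm_volterraOp_le (h : 0 ≤ T₀) (hK : IntegrableOn K (Ioc 0 T₀)) :
    ‖volterraOp h K hK‖ ≤ ∫ s in Ioc 0 T₀, |K s| :=
  LinearMap.mkContinuous_norm_le _ (by positivity) _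

theorem volterraOp_sub (h : 0 ≤ T₀) (hK : IntegrableOn K (Ioc 0 T₀))
    (hK' : IntegrableOn K' (Ioc 0 T₀)) :
    volterraOp h K hK - volterraOp h K' hK' = volterraOp h (K - K') (hK.sub hK') := by
  ext v t
  exact (volterraConv_sub_left hK hK' (v.continuous.Icc_extend' (h := h)).continuousOn
    t.2).symm

theorem norm_smul_volterraOp_le (h : 0 ≤ T₀) (hK : IntegrableOn K (Ioc 0 T₀)) (ρ : ℝ) :
    ‖ρ • volterraOp h K hK‖ ≤ |ρ| * ∫ s in Ioc 0 T₀, |K s| := by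
  refine (ContinuousLinearMap.opNorm_smul_le ρ (volterraOp h K hK)).trans ?_
  rw [Real.norm_eq_abs]
  exact mul_le_mul_of_nonneg_left (norm_volterraOp_le h hK) (abs_nonneg ρ)

def expNegMul (T₀ l : ℝ) : C(Icc 0 T₀, ℝ) := ⟨fun t => Real.exp (-(l * t)), by fun_prop⟩

theorem norm_expNegMul_le {l : ℝ} (hl : 0 ≤ l) : ‖expNegMul T₀ l‖ ≤ 1 :=
  (ContinuousMap.norm_le _ zero_le_one).2 fun t => by
    simpa [expNegMul, expWeighted] using abs_expWeighted_le hl t.2.1 1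

theorem exists_expWeighted_eq {w : ℝ → ℝ} (hw : ContinuousOn w (Icc 0 T₀)) (l : ℝ) :
    ∃ v : C(Icc 0 T₀, ℝ), ∀ t : Icc 0 T₀, v t = expWeighted l w t :=
  ⟨⟨fun t => expWeighted l w t,
    ((by fun_prop : Continuous fun s => Real.exp (-(l * s))).continuousOn.mul hw).comp_continuous
      continuous_subtype_val Subtype.prop⟩, fun _ => rfl⟩

theorem add_mul_volterraConv_expWeighted {l ρ : ℝ} {w : ℝ → ℝ} (ht : 0 ≤ t)
    (hV : EqOn V (expWeighted l w) (Icc 0 t)) :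
    V t + ρ * volterraConv (expWeighted l K) V t =
      Real.exp (-(l * t)) * (w t + ρ * volterraConv K w t) := by
  rw [volterraConv_congr ht hV, ← expWeighted_volterraConv, hV ⟨ht, le_rfl⟩, expWeighted,
    expWeighted]
  ring

theorem forall_add_mul_volterraConv_eq_one_iff (h : 0 ≤ T₀) (hK : IntegrableOn K (Ioc 0 T₀))
    {l ρ : ℝ} {w : ℝ → ℝ} {v : C(Icc 0 T₀, ℝ)} (hv : ∀ t : Icc 0 T₀, v t = expWeighted l w t) :
    (∀ t ∈ Icc 0 T₀, w t + ρ * volterraConv K w t = 1) ↔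
      v + ρ • volterraOp h (expWeighted l K) (integrableOn_expWeighted hK l) v =
        expNegMul T₀ l := by
  have key : ∀ t : Icc 0 T₀,
      (v + ρ • volterraOp h (expWeighted l K) (integrableOn_expWeighted hK l) v) t =
        Real.exp (-(l * t)) * (w t + ρ * volterraConv K w t) := by
    intro t
    have hV : EqOn (IccExtend h v) (expWeighted l w) (Icc 0 t) := fun σ hσ => by
      rw [IccExtend_of_mem h v ⟨hσ.1, hσ.2.trans t.2.2⟩, hv]
    rw [← add_mul_volterraConv_expWeighted t.2.1 hV, IccExtend_val]
    rfl
  simp only [ContinuousMap.ext_iff, key, expNegMul, ContinuousMap.coe_mk]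
  constructor
  · intro H t
    rw [H t t.2, mul_one]
  · intro H t ht
    exact mul_left_cancel₀ (Real.exp_ne_zero _) ((H ⟨t, ht⟩).trans (mul_one _).symm)

theorem exists_isVolterraSol (h : 0 ≤ T₀) (hK : IntegrableOn K (Ioc 0 T₀)) (ρ : ℝ) :
    ∃ w, IsVolterraSol T₀ K ρ w := by
  obtain ⟨l, -, hl⟩ := exists_mul_integral_abs_expWeighted_le hK |ρ| (δ := 1 / 2) (by norm_num)
  have hT : ‖ρ • volterraOp h (expWeighted l K) (integrableOn_expWeighted hK l)‖ < 1 :=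
    ((norm_smul_volterraOp_le h _ ρ).trans hl).trans_lt (by norm_num)
  obtain ⟨v, hv⟩ := exists_add_apply_eq_of_norm_lt_one hT (expNegMul T₀ l)
  let w t := Real.exp (l * t) * IccExtend h v t
  have hvw : ∀ t : Icc 0 T₀, v t = expWeighted l w t := fun t => by
    simp only [w, expWeighted, IccExtend_val, ← mul_assoc, ← Real.exp_add, neg_add_cancel,
      Real.exp_zero, one_mul]
  refine ⟨w, isVolterraSol_iff_volterraConv.2
    ⟨?_, (forall_add_mul_volterraConv_eq_one_iff h hK hvw).2 hv⟩⟩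
  exact ((by fun_prop : Continuous fun t => Real.exp (l * t)).mul
    v.continuous.Icc_extend').continuousOn

theorem abs_sub_le_of_isVolterraSol (h : 0 ≤ T₀) (hK : IntegrableOn K (Ioc 0 T₀))
    (hK' : IntegrableOn K' (Ioc 0 T₀)) {l ρ : ℝ} (hl : 0 ≤ l)
    (hsmall : |ρ| * ∫ s in Ioc 0 T₀, |expWeighted l K' s| ≤ 1 / 4)
    (hclose : |ρ| * ∫ s in Ioc 0 T₀, |K s - K' s| ≤ 1 / 4)
    {w w' : ℝ → ℝ} (hw : IsVolterraSol T₀ K ρ w) (hw' : IsVolterraSol T₀ K' ρ w')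
    (ht : t ∈ Icc 0 T₀) :
    |w t - w' t| ≤ 4 * (|ρ| * ∫ s in Ioc 0 T₀, |K s - K' s|) * Real.exp (l * T₀) := by
  rw [isVolterraSol_iff_volterraConv] at hw hw'
  obtain ⟨v, hv⟩ := exists_expWeighted_eq hw.1 l
  obtain ⟨v', hv'⟩ := exists_expWeighted_eq hw'.1 l
  set L := volterraOp h (expWeighted l K) (integrableOn_expWeighted hK l)
  set L' := volterraOp h (expWeighted l K') (integrableOn_expWeighted hK' l)
  have hdiff : ‖ρ • L - ρ • L'‖ ≤ |ρ| * ∫ s in Ioc 0 T₀, |K s - K' s| := by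
    rw [← smul_sub ρ L L', volterraOp_sub]
    refine (norm_smul_volterraOp_le h _ ρ).trans (mul_le_mul_of_nonneg_left ?_ (abs_nonneg ρ))
    simpa [expWeighted, mul_sub] using integral_abs_expWeighted_le (hK.sub hK') hl
  have hL' : ‖ρ • L'‖ ≤ 1 / 4 := (norm_smul_volterraOp_le h _ ρ).trans hsmall
  have hL : ‖ρ • L‖ ≤ 1 / 2 := by
    calc ‖ρ • L‖ ≤ ‖ρ • L'‖ + ‖ρ • L - ρ • L'‖ := norm_le_insert' (ρ • L) (ρ • L')
      _ ≤ 1 / 2 := by linarith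
  have hvv' := norm_sub_le_of_add_apply_eq hL (hL'.trans (by norm_num))
    ((forall_add_mul_volterraConv_eq_one_iff h hK hv).1 hw.2)
    ((forall_add_mul_volterraConv_eq_one_iff h hK' hv').1 hw'.2)
  calc |w t - w' t| = Real.exp (l * t) * |v ⟨t, ht⟩ - v' ⟨t, ht⟩| := by
        rw [hv, hv', expWeighted, expWeighted, ← mul_sub, abs_mul, Real.abs_exp, ← mul_assoc,
          ← Real.exp_add, add_neg_cancel, Real.exp_zero, one_mul]
    _ ≤ Real.exp (l * T₀) * ‖v - v'‖ := by
        gcongr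
        · exact ht.2
        · exact (v - v').norm_coe_le_norm ⟨t, ht⟩
    _ ≤ Real.exp (l * T₀) * (4 * (|ρ| * ∫ s in Ioc 0 T₀, |K s - K' s|) * 1) := by
        gcongr
        refine hvv'.trans ?_
        gcongr
        exact norm_expNegMul_le hl
    _ = _ := by ring

theorem eqOn_of_isVolterraSol (h : 0 ≤ T₀) (hK : IntegrableOn K (Ioc 0 T₀)) {ρ : ℝ}
    {w w' : ℝ → ℝ} (hw : IsVolterraSol T₀ K ρ w) (hw' : IsVolterraSol T₀ K ρ w') :
    EqOn w w' (Icc 0 T₀) := by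
  obtain ⟨l, hl, hsmall⟩ := exists_mul_integral_abs_expWeighted_le hK |ρ| (δ := 1 / 4) (by norm_num)
  intro t ht
  have := abs_sub_le_of_isVolterraSol h hK hK hl hsmall (by simp) hw hw' ht
  simpa [sub_eq_zero] using this

theorem exists_forall_abs_sub_le_of_tendsto {A : ℕ → ℝ → ℝ} {Ainf : ℝ → ℝ} (h : 0 ≤ T₀)
    (hA : ∀ n, IntegrableOn (A n) (Ioc 0 T₀)) (hAinf : IntegrableOn Ainf (Ioc 0 T₀))
    (hconv : Tendsto (fun n => ∫ t in Ioc 0 T₀, |A n t - Ainf t|) atTop (𝓝 0))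
    (R : ℝ) {ε : ℝ} (hε : 0 < ε) :
    ∃ N, ∀ n ≥ N, ∀ ρ, |ρ| ≤ R → ∀ wn winf, IsVolterraSol T₀ (A n) ρ wn →
      IsVolterraSol T₀ Ainf ρ winf → ∀ t ∈ Icc 0 T₀, |wn t - winf t| ≤ ε := by
  obtain ⟨l, hl, hsmall⟩ :=
    exists_mul_integral_abs_expWeighted_le hAinf R (δ := 1 / 4) (by norm_num)
  have hδ : 0 < min (1 / 4) (ε / (4 * Real.exp (l * T₀))) := by positivity
  set δ := min (1 / 4) (ε / (4 * Real.exp (l * T₀)))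
  obtain ⟨N, hN⟩ := eventually_atTop.1
    ((hconv.const_mul R).eventually (eventually_le_nhds (by rwa [mul_zero])))
  refine ⟨N, fun n hn ρ hρ wn winf hwn hwinf t ht => ?_⟩
  have hclose : |ρ| * ∫ s in Ioc 0 T₀, |A n s - Ainf s| ≤ δ :=
    (mul_le_mul_of_nonneg_right hρ (integral_nonneg fun _ => abs_nonneg _)).trans (hN n hn)
  calc |wn t - winf t|
      ≤ 4 * (|ρ| * ∫ s in Ioc 0 T₀, |A n s - Ainf s|) * Real.exp (l * T₀) :=
        abs_sub_le_of_isVolterraSol h (hA n) hAinf hl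
          ((mul_le_mul_of_nonneg_right hρ (integral_nonneg fun _ => abs_nonneg _)).trans hsmall)
          (hclose.trans (min_le_left _ _)) hwn hwinf ht
    _ ≤ 4 * (ε / (4 * Real.exp (l * T₀))) * Real.exp (l * T₀) := by
        gcongr
        exact hclose.trans (min_le_right _ _)
    _ = ε := by field_simp

end

/-- Lemma A.2, first part: if `Aₙ → A_∞` in `L¹(0,T₀)`, then for each `ρ ≥ 0`
the Volterra equations with kernels `Aₙ`, `A_∞` have continuous solutions on `[0,T₀]`, unique
up to their values on `[0,T₀]`, and the solutions converge uniformly on `[0,T₀]`, uniformly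
for `ρ` in compact subsets of `[0,∞)`. -/
theorem volterra_stability (T₀ : ℝ) (hT₀ : 0 < T₀)
    (A : ℕ → ℝ → ℝ) (Ainf : ℝ → ℝ)
    (hA : ∀ n, IntegrableOn (A n) (Ioc 0 T₀))
    (hAinf : IntegrableOn Ainf (Ioc 0 T₀))
    (hconv : Tendsto (fun n => ∫ t in Ioc (0:ℝ) T₀, |A n t - Ainf t|) atTop (nhds 0)) :
    (∀ ρ : ℝ, 0 ≤ ρ → ∀ n : ℕ, ∃ w, IsVolterraSol T₀ (A n) ρ w) ∧
    (∀ ρ : ℝ, 0 ≤ ρ → ∃ w, IsVolterraSol T₀ Ainf ρ w) ∧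
    (∀ ρ : ℝ, 0 ≤ ρ → ∀ n : ℕ, ∀ w w',
      IsVolterraSol T₀ (A n) ρ w → IsVolterraSol T₀ (A n) ρ w' → EqOn w w' (Icc 0 T₀)) ∧
    (∀ ρ : ℝ, 0 ≤ ρ → ∀ w w',
      IsVolterraSol T₀ Ainf ρ w → IsVolterraSol T₀ Ainf ρ w' → EqOn w w' (Icc 0 T₀)) ∧
    (∀ R : ℝ, 0 < R → ∀ ε : ℝ, 0 < ε → ∃ N : ℕ, ∀ n ≥ N,
      ∀ ρ ∈ Icc (0:ℝ) R, ∀ wn winf, IsVolterraSol T₀ (A n) ρ wn →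
        IsVolterraSol T₀ Ainf ρ winf → ∀ t ∈ Icc (0:ℝ) T₀, |wn t - winf t| ≤ ε) := by
  refine ⟨fun ρ _ n => exists_isVolterraSol hT₀.le (hA n) ρ,
    fun ρ _ => exists_isVolterraSol hT₀.le hAinf ρ,
    fun _ _ n _ _ => eqOn_of_isVolterraSol hT₀.le (hA n),
    fun _ _ _ _ => eqOn_of_isVolterraSol hT₀.le hAinf,
    fun R _ ε hε => ?_⟩
  obtain ⟨N, hN⟩ := exists_forall_abs_sub_le_of_tendsto hT₀.le hA hAinf hconv R hε
  exact ⟨N, fun n hn ρ hρ => hN n hn ρ ((abs_of_nonneg hρ.1).trans_le hρ.2)⟩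
end

section
/- For every λ ≥ 0, the function z : [0,∞) → ℝ defined by z(t) = 1/(1+λ) + (λ/(1+λ)) cos(√(1+λ) · t) satisfies z(0) = 1 and z'(t) + λ ∫₀ᵗ cos(t−σ) z(σ) dσ = 0 for all t ≥ 0. -/
open MeasureTheory intervalIntegral Real

/-! Writing `ω = √(1+λ)`, the integral `∫₀ᵗ cos(t-σ) cos(ωσ) dσ`, multiplied by `ω² - 1 = λ`,
equals `ω sin(ωt) - sin t`, while `∫₀ᵗ cos(t-σ) dσ = sin t`. Hence
`(1+λ) ∫₀ᵗ cos(t-σ) z(σ) dσ = ω sin(ωt)`, and `(1+λ) z'(t) = -λ ω sin(ωt)`. -/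

lemma integral_cos_sub (t : ℝ) : ∫ σ in (0:ℝ)..t, cos (t - σ) = sin t := by
  simp [intervalIntegral.integral_comp_sub_left (fun x => cos x)]

/-- The antiderivative is `σ ↦ sin (t - σ) cos (ωσ) + ω cos (t - σ) sin (ωσ)`. -/
lemma sq_sub_one_mul_integral_cos_sub_mul_cos (ω t : ℝ) :
    (ω ^ 2 - 1) * ∫ σ in (0:ℝ)..t, cos (t - σ) * cos (ω * σ) = ω * sin (ω * t) - sin t := by
  have hderiv : ∀ σ : ℝ, HasDerivAt
      (fun σ => sin (t - σ) * cos (ω * σ) + ω * (cos (t - σ) * sin (ω * σ)))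
      ((ω ^ 2 - 1) * (cos (t - σ) * cos (ω * σ))) σ := by
    intro σ
    have hsub : HasDerivAt (fun σ : ℝ => t - σ) (-1) σ := (hasDerivAt_id σ).const_sub t
    have hmul : HasDerivAt (fun σ : ℝ => ω * σ) ω σ := by
      simpa using (hasDerivAt_id σ).const_mul ω
    refine ((((hasDerivAt_sin _).comp σ hsub).mul ((hasDerivAt_cos _).comp σ hmul)).add
      ((((hasDerivAt_cos _).comp σ hsub).mul ((hasDerivAt_sin _).comp σ hmul)).const_mul ω)
      ).congr_deriv ?_
    simp only [Function.comp_apply]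
    ring
  rw [← intervalIntegral.integral_const_mul,
    integral_eq_sub_of_hasDerivAt (fun σ _ => hderiv σ)
      (by apply Continuous.intervalIntegrable; fun_prop)]
  simp

lemma integral_cos_sub_mul_explicit_solution {lam ω : ℝ} (hω : ω ^ 2 = 1 + lam) (t : ℝ) :
    ∫ σ in (0:ℝ)..t, cos (t - σ) * (1 / (1 + lam) + lam / (1 + lam) * cos (ω * σ))
      = ω * sin (ω * t) / (1 + lam) := by
  have hsplit : ∀ σ, cos (t - σ) * (1 / (1 + lam) + lam / (1 + lam) * cos (ω * σ))
      = (1 + lam)⁻¹ * (cos (t - σ) + lam * (cos (t - σ) * cos (ω * σ))) := fun σ => by ring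
  simp_rw [hsplit]
  rw [intervalIntegral.integral_const_mul,
    intervalIntegral.integral_add (by apply Continuous.intervalIntegrable; fun_prop)
      (by apply Continuous.intervalIntegrable; fun_prop),
    intervalIntegral.integral_const_mul, integral_cos_sub,
    show lam = ω ^ 2 - 1 by linarith, sq_sub_one_mul_integral_cos_sub_mul_cos]
  field_simp
  ring

lemma hasDerivAt_const_add_mul_cos_mul (a b ω t : ℝ) :
    HasDerivAt (fun s => a + b * cos (ω * s)) (-(b * ω * sin (ω * t))) t := by
  have hmul : HasDerivAt (fun s : ℝ => ω * s) ω t := by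
    simpa using (hasDerivAt_id t).const_mul ω
  refine ((((hasDerivAt_cos _).comp t hmul).const_mul b).const_add a).congr_deriv ?_
  ring

/-- for every `λ ≥ 0`, the function
`z(t) = 1/(1+λ) + (λ/(1+λ)) cos(√(1+λ) t)` satisfies `z(0)=1` and
`z'(t) + λ ∫₀ᵗ cos(t−σ) z(σ) dσ = 0` for all `t ≥ 0`. -/
theorem cosine_kernel_explicit_solution (lam : ℝ) (hlam : 0 ≤ lam) :
    let z : ℝ → ℝ := fun t =>
      1 / (1 + lam) + (lam / (1 + lam)) * Real.cos (Real.sqrt (1 + lam) * t)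
    z 0 = 1 ∧ ∀ t : ℝ, 0 ≤ t →
      HasDerivAt z (-(lam * ∫ σ in (0:ℝ)..t, Real.cos (t - σ) * z σ)) t := by
  intro z
  have hpos : (0:ℝ) < 1 + lam := by linarith
  have hω : √(1 + lam) ^ 2 = 1 + lam := sq_sqrt hpos.le
  refine ⟨by simp only [z, mul_zero, cos_zero]; field_simp, fun t _ => ?_⟩
  rw [integral_cos_sub_mul_explicit_solution hω t]
  refine (hasDerivAt_const_add_mul_cos_mul _ _ _ t).congr_deriv ?_
  ring
end
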